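/- Bernoulli difference tail bound: let z_1,…,z_n ~ Bern(p) and w_1,…,w_n ~ Bern(q) be independent with p > q. Then for any ξ ∈ ℝ, ℙ{ Σ_{i=1}^n (z_i − w_i) ≤ nξ } ≤ exp( −n[ (√p − √q)² − (ξ/2)·log( p(1−q) / (q(1−p)) ) ] ). -/

import Mathlib

/-!
Chernoff's bound with the tilt `t = ½ log (p(1-q) / (q(1-p)))`: the probability is at most
`e^{tnξ} · E e^{-t Σ (zᵢ - wᵢ)}`, and the exponential moment factorises into
`((p e^{-t} + 1 - p)(q e^{t} + 1 - q))ⁿ`. For this `t` the product of the two factors is the squared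
Bhattacharyya coefficient `(√(pq) + √((1-p)(1-q)))²`, and `2√((1-p)(1-q)) ≤ 2 - p - q` bounds it by
`(1 - (√p - √q)²/2)² ≤ e^{-(√p - √q)²}`.
-/

open Real Finset

lemma sum_ite_le_le_exp_mul_sum {ι : Type*} [Fintype ι] {W f : ι → ℝ} (hW : ∀ i, 0 ≤ W i)
    (c : ℝ) {t : ℝ} (ht : 0 ≤ t) :
    ∑ i, (if f i ≤ c then W i else 0) ≤ exp (t * c) * ∑ i, W i * exp (-t * f i) := by
  rw [mul_sum]
  refine sum_le_sum fun i _ => ?_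
  split_ifs with hfi
  · have : 1 ≤ exp (t * c) * exp (-t * f i) := by
      rw [← exp_add, one_le_exp_iff]; nlinarith
    nlinarith [hW i]
  · exact mul_nonneg (exp_pos _).le (mul_nonneg (hW i) (exp_pos _).le)

lemma sum_prod_mul_prod_mul_exp_sum {α : Type*} [Fintype α] (n : ℕ) (P Q g h : α → ℝ) :
    ∑ xy : (Fin n → α) × (Fin n → α),
        (∏ i, P (xy.1 i)) * (∏ i, Q (xy.2 i)) * exp (∑ i, (g (xy.1 i) + h (xy.2 i)))
      = (∑ a, P a * exp (g a)) ^ n * (∑ a, Q a * exp (h a)) ^ n := by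
  rw [Fintype.sum_pow, Fintype.sum_pow, sum_mul_sum, Fintype.sum_prod_type]
  refine sum_congr rfl fun x _ => sum_congr rfl fun y _ => ?_
  rw [sum_add_distrib, exp_add, exp_sum, exp_sum, prod_mul_distrib, prod_mul_distrib]
  ring

lemma sum_bernoulli_weights_mul_exp_neg_mul_sum_sub (n : ℕ) (p q t : ℝ) :
    ∑ zw : (Fin n → Bool) × (Fin n → Bool),
        (∏ i, if zw.1 i then p else 1 - p) * (∏ i, if zw.2 i then q else 1 - q) *
          exp (-t * ∑ i, ((if zw.1 i then (1 : ℝ) else 0) - (if zw.2 i then (1 : ℝ) else 0)))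
      = (p * exp (-t) + (1 - p)) ^ n * (q * exp t + (1 - q)) ^ n := by
  convert sum_prod_mul_prod_mul_exp_sum n (fun b : Bool => if b then p else 1 - p)
    (fun b => if b then q else 1 - q) (fun b => -t * if b then (1 : ℝ) else 0)
    (fun b => t * if b then (1 : ℝ) else 0) using 1
  · refine sum_congr rfl fun zw _ => ?_
    rw [mul_sum]
    congr 2
    exact sum_congr rfl fun i _ => by ring
  · simp [add_comm]

lemma sqrt_mul_sqrt_add_sqrt_mul_sqrt_le {p q : ℝ} (hp0 : 0 ≤ p) (hp1 : p ≤ 1) (hq0 : 0 ≤ q)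
    (hq1 : q ≤ 1) : √p * √q + √(1 - p) * √(1 - q) ≤ 1 - (√p - √q) ^ 2 / 2 := by
  have h2ab := two_mul_le_add_sq (√(1 - p)) (√(1 - q))
  rw [sq_sqrt (by linarith), sq_sqrt (by linarith)] at h2ab
  nlinarith [sq_sqrt hp0, sq_sqrt hq0]

lemma sq_sqrt_mul_sqrt_add_sqrt_mul_sqrt_le_exp {p q : ℝ} (hp0 : 0 ≤ p) (hp1 : p ≤ 1) (hq0 : 0 ≤ q)
    (hq1 : q ≤ 1) : (√p * √q + √(1 - p) * √(1 - q)) ^ 2 ≤ exp (-(√p - √q) ^ 2) := by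
  have hexp : exp (-(√p - √q) ^ 2) = exp (-((√p - √q) ^ 2 / 2)) ^ 2 := by
    rw [← exp_nat_mul]; ring_nf
  rw [hexp]
  gcongr
  calc _ ≤ 1 - (√p - √q) ^ 2 / 2 := sqrt_mul_sqrt_add_sqrt_mul_sqrt_le hp0 hp1 hq0 hq1
    _ ≤ exp (-((√p - √q) ^ 2 / 2)) := by linarith [add_one_le_exp (-((√p - √q) ^ 2 / 2))]

lemma bernoulli_tilted_mgf_mul {p q : ℝ} (hp0 : 0 < p) (hp1 : p < 1) (hq0 : 0 < q) (hq1 : q < 1) :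
    (p * (√(p * (1 - q) / (q * (1 - p))))⁻¹ + (1 - p)) *
        (q * √(p * (1 - q) / (q * (1 - p))) + (1 - q))
      = (√p * √q + √(1 - p) * √(1 - q)) ^ 2 := by
  have hp1' : 0 < 1 - p := by linarith
  have hq1' : 0 < 1 - q := by linarith
  have key : ∀ u v a b : ℝ, 0 < u → 0 < v → 0 < a → 0 < b →
      (u ^ 2 * (u * b / (v * a))⁻¹ + a ^ 2) * (v ^ 2 * (u * b / (v * a)) + b ^ 2)
        = (u * v + a * b) ^ 2 := by
    intro u v a b hu hv ha hb
    field_simp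
  rw [sqrt_div' _ (by positivity), sqrt_mul hp0.le, sqrt_mul hq0.le]
  simpa [sq_sqrt, hp0.le, hq0.le, hp1'.le, hq1'.le] using
    key _ _ _ _ (sqrt_pos.2 hp0) (sqrt_pos.2 hq0) (sqrt_pos.2 hp1') (sqrt_pos.2 hq1')

open Classical in
/-- The probability is expressed as an explicit sum over the finite sample space of the
i.i.d. product weights. -/
theorem stmt16 (n : ℕ) (p q : ℝ) (hq0 : 0 < q) (hqp : q < p) (hp1 : p < 1) (ξ : ℝ) :
    (∑ zw : (Fin n → Bool) × (Fin n → Bool),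
        if (∑ i, ((if zw.1 i then (1 : ℝ) else 0) - (if zw.2 i then (1 : ℝ) else 0)))
            ≤ (n : ℝ) * ξ then
          (∏ i, if zw.1 i then p else 1 - p) * (∏ i, if zw.2 i then q else 1 - q)
        else 0)
      ≤ Real.exp (-(n : ℝ) *
          ((Real.sqrt p - Real.sqrt q) ^ 2 -
            ξ / 2 * Real.log (p * (1 - q) / (q * (1 - p))))) := by
  have hp0 : 0 < p := hq0.trans hqp
  have hq1 : q < 1 := hqp.trans hp1
  set R := p * (1 - q) / (q * (1 - p))
  have hR : 1 ≤ R := by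
    rw [one_le_div (mul_pos hq0 (by linarith))]
    nlinarith
  set t := log R / 2 with ht_def
  have ht : 0 ≤ t := div_nonneg (log_nonneg hR) zero_le_two
  have hexp : exp t = √R := by rw [ht_def, ← log_sqrt (by positivity), exp_log (by positivity)]
  calc _ ≤ exp (t * (n * ξ)) * ∑ zw : (Fin n → Bool) × (Fin n → Bool),
          (∏ i, if zw.1 i then p else 1 - p) * (∏ i, if zw.2 i then q else 1 - q) *
            exp (-t * ∑ i, ((if zw.1 i then (1 : ℝ) else 0) - (if zw.2 i then (1 : ℝ) else 0))) :=
        sum_ite_le_le_exp_mul_sum (fun zw => by positivity) _ ht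
    _ = exp (t * (n * ξ)) * ((√p * √q + √(1 - p) * √(1 - q)) ^ 2) ^ n := by
        rw [sum_bernoulli_weights_mul_exp_neg_mul_sum_sub, exp_neg, hexp, ← mul_pow,
          bernoulli_tilted_mgf_mul hp0 hp1 hq0 hq1]
    _ ≤ exp (t * (n * ξ)) * exp (-(√p - √q) ^ 2) ^ n := by
        gcongr
        exact sq_sqrt_mul_sqrt_add_sqrt_mul_sqrt_le_exp hp0.le hp1.le hq0.le hq1.le
    _ = _ := by
        rw [← exp_nat_mul, ← exp_add, ht_def]
        ring_nf
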